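/- Let d ≥ 1, n = 3, and fix a constant a ∈ ℝ. Mechanism 2, defined as follows, is unanimous and group-strategyproof. Given a profile (x_1, x_2, x_3), let r be the first coordinate of x_1; let y be the point on the segment [x_1, x_2] with ‖x_1 − y‖ = min{|r − a|, ‖x_1 − x_2‖} (so y = x_1 when x_1 = x_2), and let y′ be the point on the segment [x_1, x_3] with ‖x_1 − y′‖ = min{|r − a|, ‖x_1 − x_3‖} (so y′ = x_1 when x_1 = x_3). If r ≥ a, the mechanism outputs (2/3)δ_{x_1} + (1/3)δ_{y}; otherwise it outputs (2/3)δ_{x_1} + (1/3)δ_{y′}. -/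
import Mathlib


open MeasureTheory ENNReal

noncomputable section

/-- Points in `d`-dimensional Euclidean space. -/
abbrev Pt (d : ℕ) : Type := EuclideanSpace ℝ (Fin d)

/-- Unanimity: if all agents report `z`, the output is the Dirac measure at `z`. -/
def Unanimous {d n : ℕ} (f : (Fin n → Pt d) → Measure (Pt d)) : Prop :=
  ∀ z : Pt d, f (fun _ => z) = Measure.dirac z

/-- Group-strategyproofness: for every profile, nonempty coalition, and deviation by
the coalition, some member of the coalition does not strictly gain. -/
def GroupStrategyproof {d n : ℕ} (f : (Fin n → Pt d) → Measure (Pt d)) : Prop :=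
  ∀ x x' : Fin n → Pt d, ∀ S : Finset (Fin n), S.Nonempty →
    (∀ i ∉ S, x' i = x i) →
    ∃ i ∈ S, ∫ y, ‖y - x i‖ ∂(f x') ≥ ∫ y, ‖y - x i‖ ∂(f x)

/-- The point on the segment `[u, v]` at distance `min c ‖u - v‖` from `u`
(equal to `u` when `u = v`). -/
def segPoint {d : ℕ} (u v : Pt d) (c : ℝ) : Pt d :=
  u + ((min c ‖v - u‖) / ‖v - u‖) • (v - u)

/-- Mechanism 2 (with constant `a`) for three agents in `ℝ^d`, `d ≥ 1`.
Let `r` be the first coordinate of `x 0`, `y` the point on `[x 0, x 1]` at distance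
`min |r - a| ‖x 0 - x 1‖` from `x 0`, and `y'` the point on `[x 0, x 2]` at distance
`min |r - a| ‖x 0 - x 2‖` from `x 0`. If `r ≥ a`, output `x 0` w.p. 2/3 and `y` w.p. 1/3;
otherwise output `x 0` w.p. 2/3 and `y'` w.p. 1/3. -/
def mech2 {d : ℕ} (hd : 1 ≤ d) (a : ℝ) (x : Fin 3 → Pt d) : Measure (Pt d) :=
  let r : ℝ := x 0 ⟨0, by omega⟩
  if a ≤ r then
    (2/3 : ℝ≥0∞) • Measure.dirac (x 0) + (1/3 : ℝ≥0∞) • Measure.dirac (segPoint (x 0) (x 1) |r - a|)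
  else
    (2/3 : ℝ≥0∞) • Measure.dirac (x 0) + (1/3 : ℝ≥0∞) • Measure.dirac (segPoint (x 0) (x 2) |r - a|)

lemma integrable_norm_dirac {d : ℕ} (p u : Pt d) :
    Integrable (fun y => ‖y - p‖) (Measure.dirac u) := by
  constructor
  · exact (continuous_id.sub continuous_const).norm.aestronglyMeasurable
  · rw [HasFiniteIntegral, lintegral_dirac]
    exact ENNReal.coe_lt_top

lemma integral_mix {d : ℕ} (u v p : Pt d) :
    ∫ y, ‖y - p‖ ∂((2/3 : ℝ≥0∞) • Measure.dirac u + (1/3 : ℝ≥0∞) • Measure.dirac v)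
      = 2/3 * ‖u - p‖ + 1/3 * ‖v - p‖ := by
  rw [integral_add_measure
      ((integrable_norm_dirac p u).smul_measure ((ENNReal.div_lt_top (by norm_num) (by norm_num)).ne))
      ((integrable_norm_dirac p v).smul_measure ((ENNReal.div_lt_top (by norm_num) (by norm_num)).ne)),
    integral_smul_measure, integral_smul_measure, integral_dirac, integral_dirac]
  norm_num [ENNReal.toReal_div]

lemma segPoint_self {d : ℕ} (u : Pt d) (c : ℝ) : segPoint u u c = u := by
  simp [segPoint]

lemma norm_segPoint_sub_left {d : ℕ} (u v : Pt d) {c : ℝ} (hc : 0 ≤ c) :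
    ‖segPoint u v c - u‖ = min c ‖v - u‖ := by
  rcases eq_or_ne v u with h | h
  · simp [h, segPoint, hc]
  · have hn : ‖v - u‖ ≠ 0 := by simpa [sub_eq_zero] using h
    have hm : 0 ≤ min c ‖v - u‖ := le_min hc (norm_nonneg _)
    rw [segPoint, add_sub_cancel_left, norm_smul, Real.norm_eq_abs,
      abs_of_nonneg (div_nonneg hm (norm_nonneg _)), div_mul_cancel₀ _ hn]

lemma norm_segPoint_sub_right {d : ℕ} (u v : Pt d) {c : ℝ} (hc : 0 ≤ c) :
    ‖segPoint u v c - v‖ = ‖v - u‖ - min c ‖v - u‖ := by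
  rcases eq_or_ne v u with h | h
  · simp [h, segPoint, hc]
  · have hn : ‖v - u‖ ≠ 0 := by simpa [sub_eq_zero] using h
    have hn' : (0:ℝ) < ‖v - u‖ := lt_of_le_of_ne (norm_nonneg _) (Ne.symm hn)
    have : segPoint u v c - v = ((min c ‖v - u‖) / ‖v - u‖ - 1) • (v - u) := by
      rw [segPoint, sub_smul, one_smul]; abel
    rw [this, norm_smul, Real.norm_eq_abs, abs_of_nonpos, neg_sub, sub_mul,
      div_mul_cancel₀ _ hn, one_mul]
    rw [sub_nonpos, div_le_one hn']
    exact min_le_right _ _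

lemma abs_coord_le {d : ℕ} (u v : Pt d) (i : Fin d) : |u i - v i| ≤ ‖u - v‖ := by
  have h1 : u i - v i = (u - v) i := rfl
  rw [h1, EuclideanSpace.norm_eq, ← Real.sqrt_sq_eq_abs]
  apply Real.sqrt_le_sqrt
  have := Finset.single_le_sum (f := fun j => ‖(u - v) j‖ ^ 2)
    (fun j _ => sq_nonneg _) (Finset.mem_univ i)
  simpa [Real.norm_eq_abs, sq_abs] using this

/-- Expected cost, at point `p`, of the lottery `2/3 δ_u + 1/3 δ_{segPoint u w c}`. -/
def mcost {d : ℕ} (u w : Pt d) (c : ℝ) (p : Pt d) : ℝ :=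
  2/3 * ‖u - p‖ + 1/3 * ‖segPoint u w c - p‖

lemma mech2_def {d : ℕ} (hd : 1 ≤ d) (a : ℝ) (x : Fin 3 → Pt d) :
    mech2 hd a x =
      if a ≤ x 0 ⟨0, hd⟩ then
        (2/3 : ℝ≥0∞) • Measure.dirac (x 0)
          + (1/3 : ℝ≥0∞) • Measure.dirac (segPoint (x 0) (x 1) |x 0 ⟨0, hd⟩ - a|)
      else
        (2/3 : ℝ≥0∞) • Measure.dirac (x 0)
          + (1/3 : ℝ≥0∞) • Measure.dirac (segPoint (x 0) (x 2) |x 0 ⟨0, hd⟩ - a|) := rfl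

lemma mech2_cost {d : ℕ} (hd : 1 ≤ d) (a : ℝ) (x : Fin 3 → Pt d) (p : Pt d) :
    ∫ y, ‖y - p‖ ∂(mech2 hd a x) =
      if a ≤ x 0 ⟨0, hd⟩ then mcost (x 0) (x 1) |x 0 ⟨0, hd⟩ - a| p
      else mcost (x 0) (x 2) |x 0 ⟨0, hd⟩ - a| p := by
  rw [mech2_def]
  split_ifs <;> simp only [mcost] <;> exact integral_mix _ _ _

lemma mcost_self {d : ℕ} (u w : Pt d) {c : ℝ} (hc : 0 ≤ c) :
    mcost u w c u = 1/3 * min c ‖w - u‖ := by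
  rw [mcost, norm_segPoint_sub_left u w hc, sub_self, norm_zero]
  ring

lemma mcost_target {d : ℕ} (u w : Pt d) {c : ℝ} (hc : 0 ≤ c) :
    mcost u w c w = ‖w - u‖ - 1/3 * min c ‖w - u‖ := by
  rw [mcost, norm_segPoint_sub_right u w hc, norm_sub_rev u w]
  ring

lemma mcost_ge_first {d : ℕ} (u w : Pt d) (c : ℝ) (p : Pt d) :
    mcost u w c p ≥ 2/3 * ‖u - p‖ := by
  have := norm_nonneg (segPoint u w c - p)
  rw [mcost]; nlinarith

lemma mcost_dev_ge {d : ℕ} (x0 w xj : Pt d) {c : ℝ} (hc : 0 ≤ c) :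
    mcost x0 w c xj ≥ ‖xj - x0‖ - 1/3 * min c ‖xj - x0‖ := by
  have h1 : ‖segPoint x0 w c - x0‖ = min c ‖w - x0‖ := norm_segPoint_sub_left x0 w hc
  have h2 : ‖xj - x0‖ ≤ ‖xj - segPoint x0 w c‖ + ‖segPoint x0 w c - x0‖ := by
    have := dist_triangle xj (segPoint x0 w c) x0
    simpa [dist_eq_norm] using this
  have h3 : ‖xj - segPoint x0 w c‖ = ‖segPoint x0 w c - xj‖ := norm_sub_rev _ _
  have h4 : min c ‖w - x0‖ ≤ c := min_le_left _ _
  have h5 : (0:ℝ) ≤ ‖segPoint x0 w c - xj‖ := norm_nonneg _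
  have h6 : ‖x0 - xj‖ = ‖xj - x0‖ := norm_sub_rev _ _
  rw [mcost, h6]
  rcases min_cases c ‖xj - x0‖ with ⟨hm, _⟩ | ⟨hm, _⟩ <;> rw [hm] <;> linarith

lemma mcost_sum {d : ℕ} (u w : Pt d) (c : ℝ) (p q : Pt d) :
    mcost u w c p + mcost u w c q ≥ ‖q - p‖ := by
  have h1 : ‖q - p‖ ≤ ‖u - q‖ + ‖u - p‖ := by
    have := dist_triangle q u p
    simp only [dist_eq_norm] at this
    rw [norm_sub_rev q u] at this
    linarith
  have h2 : ‖q - p‖ ≤ ‖segPoint u w c - q‖ + ‖segPoint u w c - p‖ := by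
    have := dist_triangle q (segPoint u w c) p
    simp only [dist_eq_norm] at this
    rw [norm_sub_rev q (segPoint u w c)] at this
    linarith
  simp only [mcost]
  nlinarith

lemma mcost_L3 {d : ℕ} (u' xj x0 : Pt d) {c c' : ℝ} (hc' : 0 ≤ c')
    (hcc : c ≤ ‖u' - x0‖ + c') :
    mcost u' xj c' x0 ≥ 1/3 * min c ‖xj - x0‖ := by
  set s := segPoint u' xj c' with hs
  have h1 : ‖s - xj‖ = ‖xj - u'‖ - min c' ‖xj - u'‖ := norm_segPoint_sub_right u' xj hc'
  have h2 : ‖xj - x0‖ ≤ ‖xj - s‖ + ‖s - x0‖ := by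
    have := dist_triangle xj s x0
    simpa [dist_eq_norm] using this
  have h3 : ‖xj - s‖ = ‖s - xj‖ := norm_sub_rev _ _
  have h4 : ‖xj - u'‖ ≤ ‖xj - x0‖ + ‖u' - x0‖ := by
    have := dist_triangle xj x0 u'
    simp only [dist_eq_norm] at this
    rw [norm_sub_rev x0 u'] at this
    linarith
  have h5 : (0:ℝ) ≤ ‖s - x0‖ := norm_nonneg _
  have h6 : (0:ℝ) ≤ ‖u' - x0‖ := norm_nonneg _
  rw [mcost, ← hs]
  rcases min_cases c' ‖xj - u'‖ with ⟨hm, _⟩ | ⟨hm, _⟩ <;>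
    rcases min_cases c ‖xj - x0‖ with ⟨hn, _⟩ | ⟨hn, _⟩ <;>
    rcases le_total c' ‖u' - x0‖ with hle | hle <;>
    rw [hn] <;> rw [hm] at h1 <;> linarith

lemma helperA {d : ℕ} (u' w' x0 xj : Pt d) {c c' : ℝ} (hc : 0 ≤ c)
    (hA : mcost u' w' c' x0 < mcost x0 xj c x0) :
    mcost u' w' c' xj ≥ mcost x0 xj c xj := by
  have h1 := mcost_self x0 xj hc
  have h2 := mcost_target x0 xj hc
  have h3 := mcost_sum u' w' c' x0 xj
  linarith

/-- For `d ≥ 1`, `n = 3`, and any constant `a`, Mechanism 2 is unanimous and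
group-strategyproof. -/
theorem mech2_unanimous_and_group_strategyproof {d : ℕ} (hd : 1 ≤ d) (a : ℝ) :
    Unanimous (mech2 hd a) ∧ GroupStrategyproof (mech2 hd a) := by
  constructor
  · intro z
    have h1 : (2/3 : ℝ≥0∞) + 1/3 = 1 := by
      rw [ENNReal.div_add_div_same, show (2+1:ℝ≥0∞) = 3 by norm_num]
      exact ENNReal.div_self (by norm_num) (by norm_num)
    rw [mech2_def]
    split_ifs <;> simp only [segPoint_self] <;> rw [← add_smul, h1, one_smul]
  · intro x x' S hS hfix
    have hc : (0:ℝ) ≤ |x 0 ⟨0, hd⟩ - a| := abs_nonneg _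
    have hc' : (0:ℝ) ≤ |x' 0 ⟨0, hd⟩ - a| := abs_nonneg _
    have hcc : |x 0 ⟨0, hd⟩ - a| ≤ ‖x' 0 - x 0‖ + |x' 0 ⟨0, hd⟩ - a| := by
      have t1 := abs_sub_le (x 0 ⟨0, hd⟩) (x' 0 ⟨0, hd⟩) a
      have t2 := abs_coord_le (x 0) (x' 0) ⟨0, hd⟩
      have t3 : ‖x 0 - x' 0‖ = ‖x' 0 - x 0‖ := norm_sub_rev _ _
      linarith
    by_cases h0 : (0 : Fin 3) ∈ S
    · by_cases hr : a ≤ x 0 ⟨0, hd⟩ <;> by_cases hr' : a ≤ x' 0 ⟨0, hd⟩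
      · -- j = j' = 1
        by_cases h1 : (1 : Fin 3) ∈ S
        · by_cases hA : mcost (x' 0) (x' 1) |x' 0 ⟨0, hd⟩ - a| (x 0)
              ≥ mcost (x 0) (x 1) |x 0 ⟨0, hd⟩ - a| (x 0)
          · refine ⟨0, h0, ?_⟩
            rw [mech2_cost hd a x' (x 0), mech2_cost hd a x (x 0), if_pos hr', if_pos hr]
            exact hA
          · refine ⟨1, h1, ?_⟩
            rw [mech2_cost hd a x' (x 1), mech2_cost hd a x (x 1), if_pos hr', if_pos hr]
            exact helperA _ _ _ _ hc (lt_of_not_ge hA)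
        · refine ⟨0, h0, ?_⟩
          rw [mech2_cost hd a x' (x 0), mech2_cost hd a x (x 0), if_pos hr', if_pos hr,
            hfix 1 h1, mcost_self (x 0) (x 1) hc]
          exact mcost_L3 (x' 0) (x 1) (x 0) hc' hcc
      · -- sign flip: r ≥ a, r' < a; agent 0
        refine ⟨0, h0, ?_⟩
        rw [mech2_cost hd a x' (x 0), mech2_cost hd a x (x 0), if_neg hr', if_pos hr,
          mcost_self (x 0) (x 1) hc]
        push_neg at hr'
        have hA := abs_coord_le (x' 0) (x 0) ⟨0, hd⟩
        have hB : -(x' 0 ⟨0, hd⟩ - x 0 ⟨0, hd⟩) ≤ |x' 0 ⟨0, hd⟩ - x 0 ⟨0, hd⟩| := neg_le_abs _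
        have hC : |x 0 ⟨0, hd⟩ - a| = x 0 ⟨0, hd⟩ - a := abs_of_nonneg (by linarith)
        have hD := min_le_left (|x 0 ⟨0, hd⟩ - a|) ‖x 1 - x 0‖
        have hE := norm_nonneg (x' 0 - x 0)
        have hF := mcost_ge_first (x' 0) (x' 2) (|x' 0 ⟨0, hd⟩ - a|) (x 0)
        linarith
      · -- sign flip: r < a, r' ≥ a; agent 0
        refine ⟨0, h0, ?_⟩
        rw [mech2_cost hd a x' (x 0), mech2_cost hd a x (x 0), if_pos hr', if_neg hr,
          mcost_self (x 0) (x 2) hc]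
        push_neg at hr
        have hA := abs_coord_le (x' 0) (x 0) ⟨0, hd⟩
        have hB : x' 0 ⟨0, hd⟩ - x 0 ⟨0, hd⟩ ≤ |x' 0 ⟨0, hd⟩ - x 0 ⟨0, hd⟩| := le_abs_self _
        have hC : |x 0 ⟨0, hd⟩ - a| = -(x 0 ⟨0, hd⟩ - a) := abs_of_nonpos (by linarith)
        have hD := min_le_left (|x 0 ⟨0, hd⟩ - a|) ‖x 2 - x 0‖
        have hE := norm_nonneg (x' 0 - x 0)
        have hF := mcost_ge_first (x' 0) (x' 1) (|x' 0 ⟨0, hd⟩ - a|) (x 0)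
        linarith
      · -- j = j' = 2
        by_cases h2 : (2 : Fin 3) ∈ S
        · by_cases hA : mcost (x' 0) (x' 2) |x' 0 ⟨0, hd⟩ - a| (x 0)
              ≥ mcost (x 0) (x 2) |x 0 ⟨0, hd⟩ - a| (x 0)
          · refine ⟨0, h0, ?_⟩
            rw [mech2_cost hd a x' (x 0), mech2_cost hd a x (x 0), if_neg hr', if_neg hr]
            exact hA
          · refine ⟨2, h2, ?_⟩
            rw [mech2_cost hd a x' (x 2), mech2_cost hd a x (x 2), if_neg hr', if_neg hr]
            exact helperA _ _ _ _ hc (lt_of_not_ge hA)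
        · refine ⟨0, h0, ?_⟩
          rw [mech2_cost hd a x' (x 0), mech2_cost hd a x (x 0), if_neg hr', if_neg hr,
            hfix 2 h2, mcost_self (x 0) (x 2) hc]
          exact mcost_L3 (x' 0) (x 2) (x 0) hc' hcc
    · -- 0 ∉ S
      have hx0 : x' 0 = x 0 := hfix 0 h0
      by_cases hr : a ≤ x 0 ⟨0, hd⟩
      · by_cases h1 : (1 : Fin 3) ∈ S
        · refine ⟨1, h1, ?_⟩
          rw [mech2_cost hd a x' (x 1), mech2_cost hd a x (x 1), hx0, if_pos hr, if_pos hr,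
            mcost_target (x 0) (x 1) hc]
          exact mcost_dev_ge (x 0) (x' 1) (x 1) hc
        · obtain ⟨i, hi⟩ := hS
          refine ⟨i, hi, ?_⟩
          rw [mech2_cost hd a x' (x i), mech2_cost hd a x (x i), hx0, hfix 1 h1]
          simp only [if_pos hr]
          exact le_rfl
      · by_cases h2 : (2 : Fin 3) ∈ S
        · refine ⟨2, h2, ?_⟩
          rw [mech2_cost hd a x' (x 2), mech2_cost hd a x (x 2), hx0, if_neg hr, if_neg hr,
            mcost_target (x 0) (x 2) hc]
          exact mcost_dev_ge (x 0) (x' 2) (x 2) hc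
        · obtain ⟨i, hi⟩ := hS
          refine ⟨i, hi, ?_⟩
          rw [mech2_cost hd a x' (x i), mech2_cost hd a x (x i), hx0, hfix 2 h2]
          simp only [if_neg hr]
          exact le_rfl
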